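/- The level 2 congruence subgroup GL_2(n, ℤ) cannot be generated by fewer than n² elements. -/

import Mathlib

/-!
Every `g ∈ level2 n` is `1 + 2A` for an integer matrix `A`, and `(1 + 2A)(1 + 2B) = 1 + 2(A + B + 2AB)`,
so `1 + 2A ↦ A mod 2` is a homomorphism from `level2 n` onto the additive group of `Mat_n(𝔽₂)`; it is
onto because `1 + 2Eᵢⱼ` (`i ≠ j`) and `1 - 2Eᵢᵢ` lie in `level2 n` and map to the matrix units.
A generating set of `level2 n` therefore maps onto a spanning set of the `n²`-dimensional
`𝔽₂`-vector space `Mat_n(𝔽₂)`.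
-/

def level2 (n : ℕ) : Subgroup (GL (Fin n) ℤ) :=
  (Matrix.GeneralLinearGroup.map (n := Fin n) (Int.castRingHom (ZMod 2))).ker

open Matrix Module

section Generators

variable {G K V : Type*} [Group G] [DivisionRing K] [AddCommGroup V] [Module K V]

theorem finrank_le_card_of_closure_eq_top (f : G →* Multiplicative V)
    (hf : Function.Surjective f) (S : Finset G) (hS : Subgroup.closure (S : Set G) = ⊤) :
    finrank K V ≤ S.card := by
  classical
  set T : Finset V := S.image fun s => (f s).toAdd
  have hfT (g : G) : (f g).toAdd ∈ Submodule.span K (T : Set V) := by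
    have hg : g ∈ Subgroup.closure (S : Set G) := hS ▸ Subgroup.mem_top g
    induction hg using Subgroup.closure_induction with
    | mem s hs => exact Submodule.subset_span (by simpa [T] using ⟨s, hs, rfl⟩)
    | one => simp
    | mul x y _ _ hx hy => simpa using add_mem hx hy
    | inv x _ hx => simpa using neg_mem hx
  have hT : Submodule.span K (T : Set V) = ⊤ :=
    eq_top_iff.mpr fun v _ => (hf (.ofAdd v)).elim fun g hg => by simpa [hg] using hfT g
  calc finrank K V = (T : Set V).finrank K := by rw [Set.finrank, hT, finrank_top]
    _ ≤ T.card := finrank_span_finset_le_card T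
    _ ≤ S.card := Finset.card_image_le

theorem finrank_le_card_of_closure_eq {H : Subgroup G} (f : H →* Multiplicative V)
    (hf : Function.Surjective f) (S : Finset G) (hS : Subgroup.closure (S : Set G) = H) :
    finrank K V ≤ S.card := by
  subst hS
  calc finrank K V ≤ (S.preimage _ Subtype.val_injective.injOn).card :=
        finrank_le_card_of_closure_eq_top f hf _ (by simp)
    _ ≤ S.card := Finset.card_le_card_of_injOn _ (fun _ h => by simpa using h)
        Subtype.val_injective.injOn

end Generators

section Matrices

variable {ι : Type*} [DecidableEq ι] [Fintype ι]

def halfModTwo (M : Matrix ι ι ℤ) : Matrix ι ι (ZMod 2) :=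
  (M - 1).map fun x => ((x / 2 : ℤ) : ZMod 2)

theorem halfModTwo_one_add_two_smul (A : Matrix ι ι ℤ) :
    halfModTwo (1 + 2 • A) = (Int.castRingHom (ZMod 2)).mapMatrix A := by
  ext i j
  simp [halfModTwo, -nsmul_eq_mul]

theorem mapMatrix_intCast_two_nsmul (A : Matrix ι ι ℤ) :
    (Int.castRingHom (ZMod 2)).mapMatrix (2 • A) = 0 := by
  rw [map_nsmul, ← Nat.cast_smul_eq_nsmul (ZMod 2), ZMod.natCast_self, zero_smul]

theorem mapMatrix_intCast_eq_one_iff {M : Matrix ι ι ℤ} :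
    (Int.castRingHom (ZMod 2)).mapMatrix M = 1 ↔ ∃ A, M = 1 + 2 • A := by
  constructor
  · intro h
    refine ⟨(M - 1).map (· / 2), ext fun i j => ?_⟩
    have h2 : (2 : ℤ) ∣ M i j - (1 : Matrix ι ι ℤ) i j := by
      refine (ZMod.intCast_zmod_eq_zero_iff_dvd _ 2).mp ?_
      simpa [h] using congr_fun₂ (map_sub (Int.castRingHom (ZMod 2)).mapMatrix M 1) i j
    simp [-nsmul_eq_mul, Int.mul_ediv_cancel' h2]
  · rintro ⟨A, rfl⟩
    rw [map_add, map_one, mapMatrix_intCast_two_nsmul, add_zero]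

theorem one_add_two_smul_mul_one_add_two_smul (A B : Matrix ι ι ℤ) :
    (1 + 2 • A) * (1 + 2 • B) = 1 + 2 • (A + B + 2 • (A * B)) := by
  simp only [mul_add, add_mul, one_mul, mul_one, smul_mul_smul_comm, smul_add]
  abel

theorem isUnit_one_add_single_of_ne {R : Type*} [CommRing R] {i j : ι} (h : i ≠ j) (c : R) :
    IsUnit (1 + single i j c) :=
  .of_mul_eq_one (transvection i j (-c))
    ((transvection_mul_transvection_same _ _ h c (-c)).trans (by simp))

theorem isUnit_one_add_two_smul_single_neg_one {R : Type*} [CommRing R] (i : ι) :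
    IsUnit (1 + 2 • single i i (-1 : R)) :=
  .of_mul_eq_one (1 + 2 • single i i (-1 : R)) (by
    simp only [mul_add, add_mul, one_mul, mul_one, smul_mul_smul_comm, single_mul_single_same,
      neg_mul_neg, ← single_neg]
    module)

theorem exists_isUnit_one_add_two_smul_mapMatrix_eq_single (i j : ι) :
    ∃ A : Matrix ι ι ℤ,
      IsUnit (1 + 2 • A) ∧ (Int.castRingHom (ZMod 2)).mapMatrix A = single i j 1 := by
  by_cases hij : i = j
  · subst hij
    refine ⟨single i i (-1), isUnit_one_add_two_smul_single_neg_one i, ?_⟩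
    rw [RingHom.mapMatrix_apply, map_single]
    rfl
  · refine ⟨single i j 1, ?_, by rw [RingHom.mapMatrix_apply, map_single, map_one]⟩
    rw [smul_single]
    exact isUnit_one_add_single_of_ne hij _

end Matrices

variable {n : ℕ}

theorem mem_level2_iff {g : GL (Fin n) ℤ} :
    g ∈ level2 n ↔ ∃ A, (g : Matrix (Fin n) (Fin n) ℤ) = 1 + 2 • A := by
  rw [level2, MonoidHom.mem_ker, Units.ext_iff, ← mapMatrix_intCast_eq_one_iff]
  rfl

variable (n) in
def level2ToMatrixModTwo : level2 n →* Multiplicative (Matrix (Fin n) (Fin n) (ZMod 2)) where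
  toFun g := .ofAdd (halfModTwo ((g : GL (Fin n) ℤ) : Matrix (Fin n) (Fin n) ℤ))
  map_one' := by simp [halfModTwo]
  map_mul' g h := by
    obtain ⟨A, hA⟩ := mem_level2_iff.mp g.2
    obtain ⟨B, hB⟩ := mem_level2_iff.mp h.2
    simp only [Subgroup.coe_mul, Units.val_mul, hA, hB, one_add_two_smul_mul_one_add_two_smul,
      halfModTwo_one_add_two_smul, map_add, mapMatrix_intCast_two_nsmul, add_zero]
    rfl

theorem level2ToMatrixModTwo_apply_of_eq {g : level2 n} {A : Matrix (Fin n) (Fin n) ℤ}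
    (hg : ((g : GL (Fin n) ℤ) : Matrix (Fin n) (Fin n) ℤ) = 1 + 2 • A) :
    level2ToMatrixModTwo n g = .ofAdd ((Int.castRingHom (ZMod 2)).mapMatrix A) := by
  simp only [level2ToMatrixModTwo, MonoidHom.coe_mk, OneHom.coe_mk, hg,
    halfModTwo_one_add_two_smul]

theorem level2ToMatrixModTwo_surjective : Function.Surjective (level2ToMatrixModTwo n) := by
  intro M
  induction M using Matrix.induction_on' with
  | h_zero => exact ⟨1, map_one _⟩
  | h_add p q hp hq =>
    obtain ⟨g, hg⟩ := hp
    obtain ⟨h, hh⟩ := hq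
    exact ⟨g * h, by rw [map_mul, hg, hh]; rfl⟩
  | h_std_basis i j x =>
    obtain rfl | rfl := (by decide : ∀ x : ZMod 2, x = 0 ∨ x = 1) x
    · exact ⟨1, by rw [map_one, single_zero]; rfl⟩
    · obtain ⟨A, ⟨u, hu⟩, hA⟩ := exists_isUnit_one_add_two_smul_mapMatrix_eq_single i j
      exact ⟨⟨u, mem_level2_iff.mpr ⟨A, hu⟩⟩, by rw [level2ToMatrixModTwo_apply_of_eq hu, hA]; rfl⟩

theorem stmt_3_general (n : ℕ) (S : Finset (GL (Fin n) ℤ))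
    (hS : Subgroup.closure (S : Set (GL (Fin n) ℤ)) = level2 n) :
    n ^ 2 ≤ S.card :=
  calc n ^ 2 = finrank (ZMod 2) (Matrix (Fin n) (Fin n) (ZMod 2)) := by
        simp [Module.finrank_matrix, sq]
    _ ≤ S.card := finrank_le_card_of_closure_eq _ level2ToMatrixModTwo_surjective S hS

/-- The level 2 congruence subgroup of `GL(n, ℤ)` cannot be generated by
fewer than `n²` elements. -/
theorem stmt_3 (n : ℕ) (hn : 1 ≤ n) (S : Finset (GL (Fin n) ℤ))
    (hS : Subgroup.closure (S : Set (GL (Fin n) ℤ)) = level2 n) :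
    n ^ 2 ≤ S.card :=
  stmt_3_general n S hS
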